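/- arXiv:2209.00119 — 2 statements merged into one kernel-verified Lean document; each statement's English description precedes it below -/
import Mathlib

section
/- Let G be a finite simple graph on vertex set {1,…,n} and I(G) ⊆ S its edge ideal. Let f = x_{i_1} + ⋯ + x_{i_r} be a sum of r distinct indeterminates of S, let B ⊆ S be a monomial ideal, and let A ⊆ S be a homogeneous ideal such that A ⊆ B, A : (f) = A, and I(G) = fB + A. Then for every i ∈ {1,…,n}, the variable x_i is an element of B if and only if {i_q, i} is an edge of G for every q ∈ {1,…,r} (that is, if and only if x_i ∈ N_f). -/
open MvPolynomial

/-- The height of an ideal: the infimum of `Order.height P` over primes `P` containing it. -/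
noncomputable def Ideal.ht {R : Type*} [CommRing R] (I : Ideal R) : ℕ∞ :=
  ⨅ P : {P : PrimeSpectrum R // I ≤ P.asIdeal}, Order.height P.1

/-- The depth of a local ring: the supremum of lengths of regular sequences contained in the
maximal ideal. -/
noncomputable def IsLocalRing.depth (R : Type*) [CommRing R] [IsLocalRing R] : ℕ∞ :=
  ⨆ rs : {rs : List R // (∀ r ∈ rs, r ∈ IsLocalRing.maximalIdeal R) ∧
      RingTheory.Sequence.IsRegular R rs}, (rs.1.length : ℕ∞)

/-- A local ring is Cohen–Macaulay if its depth equals its Krull dimension. -/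
def IsCohenMacaulayLocalRing (R : Type*) [CommRing R] [IsLocalRing R] : Prop :=
  (IsLocalRing.depth R : WithBot ℕ∞) = ringKrullDim R

/-- A ring is Cohen–Macaulay if its localization at every maximal ideal is a
Cohen–Macaulay local ring. -/
def IsCohenMacaulayRing (R : Type*) [CommRing R] : Prop :=
  ∀ (m : Ideal R) [m.IsMaximal], IsCohenMacaulayLocalRing (Localization.AtPrime m)

/-- The edge ideal of a finite simple graph on vertex set `Fin n`. -/
noncomputable def edgeIdeal (k : Type*) [CommRing k] {n : ℕ} (G : SimpleGraph (Fin n)) :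
    Ideal (MvPolynomial (Fin n) k) :=
  Ideal.span {p | ∃ i j, G.Adj i j ∧ p = X i * X j}

/-- An ideal of a polynomial ring is homogeneous if it contains every homogeneous
component of each of its elements. -/
def IsHomogeneousIdeal {k : Type*} [CommRing k] {σ : Type*} (I : Ideal (MvPolynomial σ k)) :
    Prop :=
  ∀ f ∈ I, ∀ d : ℕ, MvPolynomial.homogeneousComponent d f ∈ I

/-- A monomial ideal is an ideal generated by (monic) monomials. -/
def IsMonomialIdeal {k : Type*} [CommRing k] {σ : Type*} (I : Ideal (MvPolynomial σ k)) :
    Prop :=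
  ∃ s : Set (σ →₀ ℕ), I = Ideal.span ((fun d => monomial d (1 : k)) '' s)

/-- A squarefree monomial ideal is an ideal generated by squarefree (monic) monomials. -/
def IsSquarefreeMonomialIdeal {k : Type*} [CommRing k] {n : ℕ}
    (I : Ideal (MvPolynomial (Fin n) k)) : Prop :=
  ∃ s : Set (Finset (Fin n)), I = Ideal.span ((fun F => ∏ i ∈ F, X i) '' s)

/-- For `f = ∑ i in T, X i`, the ideal `N_f` generated by those variables `x_j` such that `j`
is adjacent in `G` to every vertex of `T`. -/
noncomputable def commonNeighborIdeal (k : Type*) [CommRing k] {n : ℕ} (G : SimpleGraph (Fin n))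
    (T : Finset (Fin n)) : Ideal (MvPolynomial (Fin n) k) :=
  Ideal.span {p | ∃ j : Fin n, (∀ i ∈ T, G.Adj i j) ∧ p = X j}

/-! Every term `x_q x_i` of `f x_i` is a squarefree quadratic monomial, so `f x_i` lies in the
monomial ideal `I(G)` exactly when all `{q, i}` with `q ∈ T` are edges. If `x_i ∈ B` then
`f x_i ∈ fB ⊆ I(G)`. Conversely, writing `f x_i = f b + a` with `b ∈ B`, `a ∈ A`, we get
`(x_i - b) f ∈ A`, hence `x_i - b ∈ A : (f) = A ⊆ B` and `x_i ∈ B`. -/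

theorem IsMonomialIdeal.monomial_mem_of_mem_support {k σ : Type*} [CommRing k]
    {I : Ideal (MvPolynomial σ k)} (hI : IsMonomialIdeal I) {p : MvPolynomial σ k}
    (hp : p ∈ I) {d : σ →₀ ℕ} (hd : d ∈ p.support) : monomial d (1 : k) ∈ I := by
  obtain ⟨s, rfl⟩ := hI
  rw [mem_ideal_span_monomial_image] at hp ⊢
  intro e he
  rw [Finset.mem_singleton.mp (support_monomial_subset he)]
  exact hp d hd

theorem Ideal.mem_of_mul_mem_span_singleton_mul_sup {R : Type*} [CommRing R]
    {A B : Ideal R} {f x : R} (hAB : A ≤ B) (hcolon : A.colon (Ideal.span {f}) ≤ A)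
    (hx : f * x ∈ Ideal.span {f} * B + A) : x ∈ B := by
  obtain ⟨c, hc, a, ha, hca⟩ := Submodule.mem_sup.mp hx
  obtain ⟨b, hb, rfl⟩ := Ideal.mem_span_singleton_mul.mp hc
  have hxb : x - b ∈ A := by
    refine hcolon (Ideal.mem_colon_span_singleton.mpr ?_)
    rw [show (x - b) * f = a by linear_combination -hca]
    exact ha
  simpa using B.add_mem (hAB hxb) hb

section EdgeIdeal

variable {k : Type*} [CommRing k] {n : ℕ} {G : SimpleGraph (Fin n)}

theorem X_mul_X_eq_monomial (a b : Fin n) :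
    (X a * X b : MvPolynomial (Fin n) k) =
      monomial (Finsupp.single a 1 + Finsupp.single b 1) 1 := by
  rw [X, X, monomial_mul, one_mul]

theorem edgeIdeal_eq_span_monomial_image :
    edgeIdeal k G = Ideal.span ((fun d => monomial d (1 : k)) ''
      {d | ∃ a b, G.Adj a b ∧ d = Finsupp.single a 1 + Finsupp.single b 1}) := by
  unfold edgeIdeal
  congr 1
  ext p
  constructor
  · rintro ⟨a, b, hab, rfl⟩
    exact ⟨_, ⟨a, b, hab, rfl⟩, (X_mul_X_eq_monomial a b).symm⟩
  · rintro ⟨d, ⟨a, b, hab, rfl⟩, rfl⟩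
    exact ⟨a, b, hab, (X_mul_X_eq_monomial a b).symm⟩

theorem isMonomialIdeal_edgeIdeal : IsMonomialIdeal (edgeIdeal k G) :=
  ⟨_, edgeIdeal_eq_span_monomial_image⟩

theorem X_mul_X_mem_edgeIdeal_iff [Nontrivial k] {a b : Fin n} :
    (X a * X b : MvPolynomial (Fin n) k) ∈ edgeIdeal k G ↔ G.Adj a b := by
  classical
  refine ⟨fun h => ?_, fun hab => Ideal.subset_span ⟨a, b, hab, rfl⟩⟩
  rw [edgeIdeal_eq_span_monomial_image, mem_ideal_span_monomial_image,
    X_mul_X_eq_monomial, support_monomial, if_neg one_ne_zero] at h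
  obtain ⟨_, ⟨c, d, hcd, rfl⟩, hle⟩ := h _ (Finset.mem_singleton_self _)
  have hvert : ∀ v, v = c ∨ v = d → v = a ∨ v = b := by
    intro v hv
    by_contra! hab
    have := hle v
    rcases hv with rfl | rfl <;>
      simp [Finsupp.single_apply, hab.1.symm, hab.2.symm] at this
  rcases hvert c (Or.inl rfl) with rfl | rfl <;> rcases hvert d (Or.inr rfl) with rfl | rfl
  · exact (hcd.ne rfl).elim
  · exact hcd
  · exact hcd.symm
  · exact (hcd.ne rfl).elim

theorem sum_X_mul_X_mem_edgeIdeal_iff [Nontrivial k] {T : Finset (Fin n)} {i : Fin n} :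
    ((∑ q ∈ T, X q) * X i : MvPolynomial (Fin n) k) ∈ edgeIdeal k G ↔ ∀ q ∈ T, G.Adj q i := by
  classical
  constructor
  · intro h q hq
    have hsupp : Finsupp.single q 1 + Finsupp.single i 1 ∈
        ((∑ q ∈ T, X q) * X i : MvPolynomial (Fin n) k).support := by
      rw [mem_support_iff, coeff_mul_X, coeff_sum]
      simp [coeff_X, Finsupp.single_left_inj, hq]
    have := isMonomialIdeal_edgeIdeal.monomial_mem_of_mem_support h hsupp
    rwa [← X_mul_X_eq_monomial, X_mul_X_mem_edgeIdeal_iff] at this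
  · intro hadj
    rw [Finset.sum_mul]
    exact Ideal.sum_mem _ fun q hq => X_mul_X_mem_edgeIdeal_iff.mpr (hadj q hq)

end EdgeIdeal

theorem stmt2_general {k : Type*} [Field k] {n : ℕ} (G : SimpleGraph (Fin n))
    (T : Finset (Fin n))
    (f : MvPolynomial (Fin n) k) (hf : f = ∑ i ∈ T, X i)
    (B A : Ideal (MvPolynomial (Fin n) k))
    (hAB : A ≤ B) (hcolon : A.colon (Ideal.span {f}) = A)
    (hlink : edgeIdeal k G = Ideal.span {f} * B + A) :
    ∀ i : Fin n, X i ∈ B ↔ ∀ q ∈ T, G.Adj q i := by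
  intro i
  rw [← sum_X_mul_X_mem_edgeIdeal_iff (k := k), ← hf, hlink]
  constructor
  · intro hXi
    exact Submodule.mem_sup_left (Ideal.mem_span_singleton_mul.mpr ⟨X i, hXi, rfl⟩)
  · exact Ideal.mem_of_mul_mem_span_singleton_mul_sup hAB hcolon.le

/-- With hypotheses as in the paper's Theorem 3.5, a variable `x_i` lies in `B`
if and only if `i` is adjacent in `G` to every one of `i₁, …, i_r` (i.e. `x_i ∈ N_f`). -/
theorem stmt2 {k : Type*} [Field k] {n : ℕ} (G : SimpleGraph (Fin n))
    (T : Finset (Fin n)) (hT : T.Nonempty)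
    (f : MvPolynomial (Fin n) k) (hf : f = ∑ i ∈ T, X i)
    (B A : Ideal (MvPolynomial (Fin n) k))
    (hBmon : IsMonomialIdeal B) (hAhom : IsHomogeneousIdeal A)
    (hAB : A ≤ B) (hcolon : A.colon (Ideal.span {f}) = A)
    (hlink : edgeIdeal k G = Ideal.span {f} * B + A) :
    ∀ i : Fin n, X i ∈ B ↔ ∀ q ∈ T, G.Adj q i :=
  stmt2_general G T f hf B A hAB hcolon hlink
end

section
/- Let A and B be proper homogeneous ideals of S, and let C = (c_1,…,c_r) be an ideal generated by homogeneous polynomials c_1,…,c_r with d = max_{1 ≤ i ≤ r} deg(c_i). Suppose f ∈ S is a homogeneous polynomial of positive degree such that C = fB + A and ht(A) + 1 = ht(C). Then 1 ≤ deg(f) < d. -/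
open MvPolynomial

/-! If `deg f ≥ d`, then, since the proper homogeneous ideal `B` contains no nonzero constant,
every element of `f B` only has homogeneous components of degree `> deg f ≥ deg cᵢ`. Taking the
component of degree `deg cᵢ` of `cᵢ ∈ f B + A` therefore puts `cᵢ` in `A`, so `C = A`. This
contradicts `ht A + 1 = ht C`, because the proper ideal `A` of the Noetherian ring `S` has
finite height. -/

lemma Ideal.ht_le_height_of_le {R : Type*} [CommRing R] {I : Ideal R} {P : PrimeSpectrum R}
    (h : I ≤ P.asIdeal) : I.ht ≤ Order.height P :=
  iInf_le (fun P : {P : PrimeSpectrum R // I ≤ P.asIdeal} => Order.height P.1) ⟨P, h⟩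

lemma Ideal.ht_ne_top {R : Type*} [CommRing R] [IsNoetherianRing R] {I : Ideal R}
    (hI : I ≠ ⊤) : I.ht ≠ ⊤ := by
  obtain ⟨M, hM, hIM⟩ := I.exists_le_maximal hI
  refine ne_top_of_le_ne_top ?_ (Ideal.ht_le_height_of_le (P := ⟨M, hM.isPrime⟩) hIM)
  rw [← PrimeSpectrum.height_eq_orderHeight]
  exact Ideal.height_ne_top_of_isPrime

namespace MvPolynomial

variable {σ : Type*}

theorem homogeneousComponent_mul_eq_zero_of_le {R : Type*} [CommSemiring R]
    {f t : MvPolynomial σ R} {p m : ℕ} (hf : f.IsHomogeneous p) (ht : coeff 0 t = 0)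
    (hm : m ≤ p) : homogeneousComponent m (f * t) = 0 := by
  rw [← sum_homogeneousComponent t, Finset.mul_sum, map_sum]
  refine Finset.sum_eq_zero fun j _ => ?_
  rcases Nat.eq_zero_or_pos j with rfl | hj
  · rw [homogeneousComponent_zero, ht, map_zero, mul_zero, map_zero]
  · rw [homogeneousComponent_of_mem (hf.mul (homogeneousComponent_isHomogeneous j t)),
      if_neg (by omega)]

end MvPolynomial

namespace IsHomogeneousIdeal

variable {σ k : Type*} [Field k] {A B : Ideal (MvPolynomial σ k)}

theorem coeff_zero_eq_zero (hB : IsHomogeneousIdeal B) (hBtop : B ≠ ⊤) {t : MvPolynomial σ k}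
    (ht : t ∈ B) : coeff 0 t = 0 := by
  by_contra h0
  have hC : MvPolynomial.C (coeff 0 t) ∈ B := homogeneousComponent_zero t ▸ hB t ht 0
  exact hBtop (B.eq_top_of_isUnit_mem hC ((Ne.isUnit h0).map MvPolynomial.C))

theorem mem_of_mem_span_singleton_mul_add (hA : IsHomogeneousIdeal A)
    (hB : IsHomogeneousIdeal B) (hBtop : B ≠ ⊤) {f c : MvPolynomial σ k} {p m : ℕ}
    (hf : f.IsHomogeneous p) (hc : c.IsHomogeneous m) (hm : m ≤ p)
    (hmem : c ∈ Ideal.span {f} * B + A) : c ∈ A := by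
  obtain ⟨y, hy, a, ha, rfl⟩ := Submodule.mem_sup.mp hmem
  obtain ⟨t, htB, rfl⟩ := Ideal.mem_span_singleton_mul.mp hy
  have hft : homogeneousComponent m (f * t) = 0 :=
    homogeneousComponent_mul_eq_zero_of_le hf (hB.coeff_zero_eq_zero hBtop htB) hm
  have hcomp := homogeneousComponent_of_mem (m := m) (n := m) hc
  rw [if_pos rfl, map_add, hft, zero_add] at hcomp
  exact hcomp ▸ hA a ha m

end IsHomogeneousIdeal

theorem stmt4_general {k : Type*} [Field k] {n : ℕ}
    (A B : Ideal (MvPolynomial (Fin n) k))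
    (hAhom : IsHomogeneousIdeal A) (hBhom : IsHomogeneousIdeal B)
    (hAproper : A ≠ ⊤) (hBproper : B ≠ ⊤)
    {r : ℕ} (c : Fin r → MvPolynomial (Fin n) k) (e : Fin r → ℕ)
    (hc : ∀ i, (c i).IsHomogeneous (e i))
    (C : Ideal (MvPolynomial (Fin n) k)) (hC : C = Ideal.span (Set.range c))
    (d : ℕ) (hd : d = Finset.univ.sup e)
    (f : MvPolynomial (Fin n) k) (df : ℕ) (hdf : 0 < df) (hfhom : f.IsHomogeneous df)
    (hlink : C = Ideal.span {f} * B + A)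
    (hht : Ideal.ht A + 1 = Ideal.ht C) :
    1 ≤ df ∧ df < d := by
  refine ⟨hdf, ?_⟩
  by_contra! hdle
  have hCA : C = A := by
    refine le_antisymm ?_ (hlink ▸ le_sup_right)
    rw [hC, Ideal.span_le]
    rintro _ ⟨i, rfl⟩
    have hei : e i ≤ df := (hd ▸ Finset.le_sup (Finset.mem_univ i)).trans hdle
    exact hAhom.mem_of_mem_span_singleton_mul_add hBhom hBproper hfhom (hc i) hei
      (hlink ▸ hC ▸ Ideal.subset_span ⟨i, rfl⟩)
  rw [hCA] at hht
  exact (ENat.lt_add_one_iff (Ideal.ht_ne_top hAproper)).mpr le_rfl |>.ne' hht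

/-- the paper's Lemma 3.1: if `C = (c₁, …, c_r)` with each `cᵢ` homogeneous of
degree `eᵢ`, `d = max eᵢ`, and `C = fB + A` with `f` homogeneous of positive degree and
`ht(A) + 1 = ht(C)`, then `1 ≤ deg f < d`. -/
theorem stmt4 {k : Type*} [Field k] {n : ℕ}
    (A B : Ideal (MvPolynomial (Fin n) k))
    (hAhom : IsHomogeneousIdeal A) (hBhom : IsHomogeneousIdeal B)
    (hAproper : A ≠ ⊤) (hBproper : B ≠ ⊤)
    {r : ℕ} (hr : 0 < r) (c : Fin r → MvPolynomial (Fin n) k) (e : Fin r → ℕ)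
    (hc : ∀ i, (c i).IsHomogeneous (e i)) (hc0 : ∀ i, c i ≠ 0)
    (C : Ideal (MvPolynomial (Fin n) k)) (hC : C = Ideal.span (Set.range c))
    (d : ℕ) (hd : d = Finset.univ.sup e)
    (f : MvPolynomial (Fin n) k) (df : ℕ) (hdf : 0 < df) (hfhom : f.IsHomogeneous df)
    (hf0 : f ≠ 0)
    (hlink : C = Ideal.span {f} * B + A)
    (hht : Ideal.ht A + 1 = Ideal.ht C) :
    1 ≤ df ∧ df < d :=
  stmt4_general A B hAhom hBhom hAproper hBproper c e hc C hC d hd f df hdf hfhom hlink hht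
end
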